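/- arXiv:2410.16002 — 3 statements merged into one kernel-verified Lean document; each statement's English description precedes it below -/
import Mathlib

section
/- Let a, b ∈ ℤ be nonzero integers and λ ∈ Ẑ^× a unit of the profinite integers such that λ·a = b in Ẑ. Then λ = ±1 and b = ±a. -/
/-- The profinite completion of `ℤ`, as the subring of compatible families in the
product of all the finite cyclic rings `ℤ/n`. -/
def ZHatSubring : Subring (∀ n : ℕ+, ZMod (n : ℕ)) where
  carrier := {x | ∀ (m k : ℕ+) (h : (m : ℕ) ∣ (k : ℕ)),
    ZMod.castHom h (ZMod (m : ℕ)) (x k) = x m}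
  zero_mem' := by intro m k h; simp
  one_mem' := by intro m k h; simp only [Pi.one_apply, map_one]
  add_mem' := fun {a b} ha hb => by
    intro m k h
    simp only [Pi.add_apply, map_add, ha m k h, hb m k h]
  mul_mem' := fun {a b} ha hb => by
    intro m k h
    simp only [Pi.mul_apply, map_mul, ha m k h, hb m k h]
  neg_mem' := fun {a} ha => by
    intro m k h
    simp only [Pi.neg_apply, map_neg, ha m k h]

/-- The ring `Ẑ` of profinite integers. -/
abbrev ZHat : Type := ↥ZHatSubring

/-!
Reducing `λ·a = b` modulo `|a|` gives `a ∣ b`, and reducing `λ⁻¹·b = a` modulo `|b|` gives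
`b ∣ a`, so `b = ±a` and `(λ ∓ 1)·a = 0`. But `Ẑ` has no `ℤ`-torsion: if `x·a = 0`, the
component of `x` modulo `m` is the reduction of its component modulo `m|a|`, which is killed
by `a` and hence divisible by `m`.
-/

theorem ZMod.castHom_eq_zero_of_mul_intCast_eq_zero {m : ℕ} {k : ℤ} (hk : k ≠ 0)
    {y : ZMod (m * k.natAbs)} (h : y * k = 0) :
    ZMod.castHom (dvd_mul_right m k.natAbs) (ZMod m) y = 0 := by
  obtain ⟨X, rfl⟩ := ZMod.intCast_surjective y
  rw [← Int.cast_mul, ZMod.intCast_zmod_eq_zero_iff_dvd] at h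
  have hmk : (m : ℤ) * k ∣ X * k :=
    (mul_dvd_mul_left _ (Int.dvd_natAbs.mpr dvd_rfl)).trans (by exact_mod_cast h)
  rw [map_intCast, ZMod.intCast_zmod_eq_zero_iff_dvd]
  exact Int.dvd_of_mul_dvd_mul_right hk hmk

namespace ZHat

def toZMod (n : ℕ+) : ZHat →+* ZMod n :=
  (Pi.evalRingHom _ n).comp ZHatSubring.subtype

theorem castHom_toZMod {m k : ℕ+} (h : (m : ℕ) ∣ k) (x : ZHat) :
    ZMod.castHom h (ZMod m) (toZMod k x) = toZMod m x :=
  x.2 m k h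

theorem ext_toZMod {x y : ZHat} (h : ∀ n, toZMod n x = toZMod n y) : x = y :=
  Subtype.ext (funext h)

theorem eq_zero_of_mul_intCast_eq_zero {a : ℤ} (ha : a ≠ 0) {x : ZHat} (h : x * a = 0) :
    x = 0 := by
  refine ext_toZMod fun m => ?_
  let n : ℕ+ := m * ⟨a.natAbs, Int.natAbs_pos.mpr ha⟩
  have hn : toZMod n x * a = 0 := by simpa using congrArg (toZMod n) h
  rw [map_zero, ← castHom_toZMod (k := n) (dvd_mul_right (m : ℕ) a.natAbs)]
  exact ZMod.castHom_eq_zero_of_mul_intCast_eq_zero ha hn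

theorem intCast_dvd_of_mul_eq {a b : ℤ} (ha : a ≠ 0) {x : ZHat} (h : x * a = b) : a ∣ b := by
  let n : ℕ+ := ⟨a.natAbs, Int.natAbs_pos.mpr ha⟩
  have hn : toZMod n x * a = b := by simpa using congrArg (toZMod n) h
  have ha0 : (a : ZMod n) = 0 :=
    (ZMod.intCast_zmod_eq_zero_iff_dvd a n).mpr (Int.natAbs_dvd.mpr dvd_rfl)
  rw [ha0, mul_zero, eq_comm, ZMod.intCast_zmod_eq_zero_iff_dvd] at hn
  exact Int.natAbs_dvd.mp hn

end ZHat

/-- if a unit `λ` of `Ẑ` carries a nonzero integer `a` to an integer `b`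
(i.e. `λ·a = b` in `Ẑ` with `a, b` nonzero), then `λ = ±1` and `b = ±a`. -/
theorem unit_mul_int_eq_int (a b : ℤ) (ha : a ≠ 0) (hb : b ≠ 0) (lam : ZHatˣ)
    (h : (lam : ZHat) * (a : ZHat) = (b : ZHat)) :
    ((lam : ZHat) = 1 ∧ b = a) ∨ ((lam : ZHat) = -1 ∧ b = -a) := by
  have hab : a ∣ b := ZHat.intCast_dvd_of_mul_eq ha h
  have hba : b ∣ a :=
    ZHat.intCast_dvd_of_mul_eq hb (x := ↑lam⁻¹) (by rw [← h, Units.inv_mul_cancel_left])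
  rcases Int.associated_iff.mp (associated_of_dvd_dvd hba hab) with rfl | rfl
  · refine .inl ⟨sub_eq_zero.mp (ZHat.eq_zero_of_mul_intCast_eq_zero ha ?_), rfl⟩
    rw [sub_mul, h, one_mul, sub_self]
  · refine .inr ⟨eq_neg_of_add_eq_zero_left (ZHat.eq_zero_of_mul_intCast_eq_zero ha ?_), rfl⟩
    rw [add_mul, h, one_mul, Int.cast_neg, neg_add_cancel]
end

section
/- Let G = ⟨a,b | bab⁻¹ = a⁻¹⟩ and G' = ⟨α,β | βαβ⁻¹ = α⁻¹⟩ be two copies of the Klein bottle group, and let f : Ĝ → Ĝ' be an isomorphism of their profinite completions Ẑ ⋊ Ẑ. Then there exist units λ, μ ∈ Ẑ^× and θ ∈ Ẑ such that f(a) = α^μ, f(b) = α^θ β^λ, and f(b²) = β^{2λ}. In particular f maps the closure of ⟨a, b²⟩ onto the closure of ⟨α, β²⟩. -/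
/-- The inversion automorphism of `ℤ` (written multiplicatively). -/
def invAut : MulAut (Multiplicative ℤ) := MulEquiv.inv (Multiplicative ℤ)

/-- The action of `ℤ` on `ℤ` where the generator acts by inversion. -/
def kleinAct : Multiplicative ℤ →* MulAut (Multiplicative ℤ) :=
  zpowersHom (MulAut (Multiplicative ℤ)) invAut

/-- The Klein bottle group `⟨a, b ∣ b a b⁻¹ = a⁻¹⟩ ≅ ℤ ⋊ ℤ`. -/
abbrev Klein : Type := SemidirectProduct (Multiplicative ℤ) (Multiplicative ℤ) kleinAct

/-- The generator `a` of the Klein bottle group. -/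
def ka : Klein := SemidirectProduct.inl (Multiplicative.ofAdd 1)

/-- The generator `b` of the Klein bottle group. -/
def kb : Klein := SemidirectProduct.inr (Multiplicative.ofAdd 1)

/-- Reduction of `Ẑ` modulo `2`. -/
def proj2 : ZHat →+ ZMod 2 where
  toFun x := x.1 ⟨2, by norm_num⟩
  map_zero' := rfl
  map_add' x y := rfl

/-- The inversion automorphism of `Ẑ` (written multiplicatively). -/
def invAutH : MulAut (Multiplicative ZHat) := MulEquiv.inv (Multiplicative ZHat)

/-- The action of `Ẑ` on `Ẑ` which factors through `ℤ/2` acting by inversion. -/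
noncomputable def tau : Multiplicative ZHat →* MulAut (Multiplicative ZHat) :=
  AddMonoidHom.toMultiplicativeLeft
    ((ZMod.lift 2 ⟨zmultiplesHom (Additive (MulAut (Multiplicative ZHat)))
        (Additive.ofMul invAutH), by
      show (2 : ℤ) • Additive.ofMul invAutH = 0
      rw [← ofMul_zpow]
      have : invAutH ^ (2 : ℤ) = 1 := by
        refine MulEquiv.ext fun x => ?_
        show invAutH (invAutH x) = x
        show ((x⁻¹ : Multiplicative ZHat))⁻¹ = x
        exact inv_inv x
      rw [this]
      rfl⟩).comp proj2)

/-- The semidirect product `Ẑ ⋊ Ẑ`, the profinite completion of the Klein bottle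
group. -/
noncomputable abbrev ZHatSemidirect : Type :=
  SemidirectProduct (Multiplicative ZHat) (Multiplicative ZHat) tau

/-- The closure of `⟨a, b²⟩` inside `Ẑ ⋊ Ẑ`, namely the subgroup `Ẑ × 2Ẑ` of elements
whose second coordinate is even. -/
noncomputable def periphH : Subgroup ZHatSemidirect :=
  MonoidHom.ker ((AddMonoidHom.toMultiplicative proj2).comp SemidirectProduct.rightHom)

/-!
The closure `A` of `⟨a⟩` is the kernel of the projection `Ẑ ⋊ Ẑ → Ẑ`, and it is characteristic:
it consists of exactly the elements whose square is a commutator, because `Ẑ` has no `2`-torsion.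
The closure of `⟨a, b²⟩` is the centralizer of `A`, so it is characteristic as well. Hence `f`
induces additive automorphisms of `A ≅ Ẑ` and of the quotient by `A`, which is also `Ẑ`. Every
additive endomorphism of `Ẑ` is multiplication by its value at `1`, so these automorphisms are
multiplication by units `μ` and `λ`. A unit of `Ẑ` is odd, so `f(b)` acts on `A` by inversion,
which gives `f(b)² = β^{2λ}`.
-/

namespace ZHat

@[ext] lemma ext {x y : ZHat} (h : ∀ n, x.1 n = y.1 n) : x = y := Subtype.ext (funext h)

lemma cast_val_apply (x : ZHat) {m k : ℕ+} (h : (m : ℕ) ∣ k) :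
    ((x.1 k).val : ZMod m) = x.1 m :=
  (ZMod.natCast_val _).trans (x.2 m k h)

lemma natCast_dvd_of_apply_eq_zero {x : ZHat} {n : ℕ+} (hx : x.1 n = 0) :
    ((n : ℕ) : ZHat) ∣ x := by
  have hdvd (j : ℕ+) : (n : ℕ) ∣ (x.1 (n * j)).val := by
    rw [← ZMod.natCast_eq_zero_iff, cast_val_apply x (by simp), hx]
  refine ⟨⟨fun j => ((x.1 (n * j)).val / n : ℕ), fun m k hmk => ?_⟩, ext fun j => ?_⟩
  · have hmod : (x.1 (n * k)).val ≡ (x.1 (n * m)).val [MOD n * m] := by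
      rw [← ZMod.natCast_eq_natCast_iff, ← PNat.mul_coe,
        cast_val_apply x (by simpa using mul_dvd_mul_left (n : ℕ) hmk), cast_val_apply x dvd_rfl]
    have hquot : (x.1 (n * k)).val / n ≡ (x.1 (n * m)).val / n [MOD m] := by
      refine Nat.ModEq.mul_left_cancel' n.ne_zero ?_
      rwa [Nat.mul_div_cancel' (hdvd k), Nat.mul_div_cancel' (hdvd m)]
    rw [ZMod.castHom_apply, ZMod.cast_natCast hmk, (ZMod.natCast_eq_natCast_iff _ _ _).mpr hquot]
  · change x.1 j = (n : ZMod j) * (((x.1 (n * j)).val / n : ℕ) : ZMod j)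
    rw [← Nat.cast_mul, Nat.mul_div_cancel' (hdvd j), cast_val_apply x (by simp)]

theorem addMonoidHom_apply_eq_mul (φ : ZHat →+ ZHat) (c : ZHat) : φ c = φ 1 * c := by
  have map_natCast_mul (m : ℕ) (z : ZHat) : φ (m * z) = m * φ z := by
    rw [← nsmul_eq_mul, map_nsmul, nsmul_eq_mul]
  ext n
  -- `c = v + n * y` with `v < n`, and `n` vanishes in the `n`-th component
  set v : ℕ := (c.1 n).val
  obtain ⟨y, hy⟩ : ((n : ℕ) : ZHat) ∣ c - v := natCast_dvd_of_apply_eq_zero <| by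
    change c.1 n - (v : ZMod n) = 0
    rw [ZMod.natCast_zmod_val, sub_self]
  have hφ : φ c = v * φ 1 + n * φ y := by
    rw [eq_add_of_sub_eq' hy, map_add, map_natCast_mul, ← mul_one (v : ZHat), map_natCast_mul,
      mul_one]
  change (φ c).1 n = (φ 1).1 n * c.1 n
  rw [hφ]
  change (v : ZMod n) * _ + (n : ZMod n) * _ = _
  rw [ZMod.natCast_self, zero_mul, add_zero, ZMod.natCast_zmod_val, mul_comm]

lemma eq_zero_of_natCast_mul_eq_zero (n : ℕ+) {y : ZHat} (h : (n : ℕ) * y = 0) : y = 0 := by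
  ext k
  have hk : ((n : ℕ) : ZMod (n * k : ℕ+)) * y.1 (n * k) = 0 :=
    congrArg (fun z : ZHat => z.1 (n * k)) h
  rw [← ZMod.natCast_zmod_val (y.1 (n * k)), ← Nat.cast_mul, ZMod.natCast_eq_zero_iff] at hk
  change y.1 k = 0
  rw [← cast_val_apply y (k := n * k) (by simp), ZMod.natCast_eq_zero_iff]
  exact Nat.dvd_of_mul_dvd_mul_left n.pos (by simpa using hk)

protected lemma two_ne_zero : (2 : ZHat) ≠ 0 :=
  fun h => absurd (congrArg (fun z : ZHat => z.1 3) h) (by decide)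

lemma isUnit_map_one_of_leftInverse {φ ψ : ZHat →+ ZHat} (h : Function.LeftInverse φ ψ) :
    IsUnit (φ 1) :=
  IsUnit.of_mul_eq_one (ψ 1) (by rw [← addMonoidHom_apply_eq_mul, h])

end ZHat

lemma proj2_units_eq_one (u : ZHatˣ) : proj2 u = 1 := by
  have h : proj2 u * proj2 ↑u⁻¹ = 1 := congrArg (fun z : ZHat => z.1 2) u.mul_inv
  generalize proj2 u = a at h
  generalize proj2 ↑u⁻¹ = b at h
  revert a b
  decide

open SemidirectProduct Multiplicative
open scoped commutatorElement

lemma tau_apply_of_even {y : Multiplicative ZHat} (h : proj2 y.toAdd = 0)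
    (x : Multiplicative ZHat) : tau y x = x := by
  simp [tau, h]

lemma tau_apply_of_odd {y : Multiplicative ZHat} (h : proj2 y.toAdd = 1)
    (x : Multiplicative ZHat) : tau y x = x⁻¹ := by
  have h1 : (1 : ZMod 2) = ((1 : ℤ) : ZMod 2) := Int.cast_one.symm
  simp only [tau, AddMonoidHom.toMultiplicativeLeft_apply_apply, AddMonoidHom.coe_comp,
    Function.comp_apply, h, h1, ZMod.lift_coe]
  rfl

lemma inl_sq_eq_commutatorElement (x : Multiplicative ZHat) :
    (inl x ^ 2 : ZHatSemidirect) = ⁅(inr (ofAdd (1 : ZHat)) : ZHatSemidirect), inl x⁻¹⁆ := by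
  rw [commutatorElement_def, ← map_inv inr, ← inl_aut, ← map_inv inl, inv_inv, ← map_mul,
    tau_apply_of_odd rfl, inv_inv, ← map_pow, sq]

lemma mem_ker_rightHom_iff_sq_mem_commutator (g : ZHatSemidirect) :
    g ∈ rightHom.ker ↔ g ^ 2 ∈ commutator ZHatSemidirect := by
  constructor
  · intro hg
    have hright : g.right = 1 := hg
    rw [← inl_left_mul_inr_right g, hright, map_one, mul_one, inl_sq_eq_commutatorElement]
    exact Subgroup.commutator_mem_commutator (Subgroup.mem_top _) (Subgroup.mem_top _)
  · intro hg
    have hsq : g.right ^ 2 = 1 := by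
      simpa only [MonoidHom.mem_ker, map_pow, rightHom_eq_right] using
        Abelianization.commutator_subset_ker rightHom hg
    have h2 : ((2 : ℕ+) : ℕ) * toAdd g.right = 0 := by
      simpa [toAdd_pow] using congrArg toAdd hsq
    exact congrArg ofAdd (ZHat.eq_zero_of_natCast_mul_eq_zero 2 h2)

instance characteristic_ker_rightHom : (rightHom.ker : Subgroup ZHatSemidirect).Characteristic :=
  Subgroup.characteristic_iff_le_comap.mpr fun ϕ g hg => by
    rw [Subgroup.mem_comap, mem_ker_rightHom_iff_sq_mem_commutator, MulEquiv.coe_toMonoidHom,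
      ← map_pow]
    exact Subgroup.characteristic_iff_le_comap.mp inferInstance ϕ
      ((mem_ker_rightHom_iff_sq_mem_commutator g).mp hg)

lemma mem_periphH_iff (g : ZHatSemidirect) : g ∈ periphH ↔ proj2 g.right.toAdd = 0 :=
  MonoidHom.mem_ker.trans (ofAdd_eq_one (A := ZMod 2))

lemma periphH_eq_centralizer :
    periphH =
      Subgroup.centralizer ((rightHom.ker : Subgroup ZHatSemidirect) : Set ZHatSemidirect) := by
  ext g
  rw [mem_periphH_iff, Subgroup.mem_centralizer_iff]
  constructor
  · intro hg h hh
    have hright : h.right = 1 := hh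
    ext
    · simp [hright, tau_apply_of_even hg, mul_comm]
    · simp [hright]
  · intro hg
    obtain heven | hodd : proj2 g.right.toAdd = 0 ∨ proj2 g.right.toAdd = 1 :=
      (by decide : ∀ z : ZMod 2, z = 0 ∨ z = 1) _
    · exact heven
    have h := congrArg (toAdd ∘ left)
      (hg (inl (ofAdd (1 : ZHat)) : ZHatSemidirect) (right_inl (φ := tau) (ofAdd 1)))
    simp only [Function.comp_apply, mul_left, left_inl, right_inl, map_one, MulAut.one_apply,
      toAdd_mul, toAdd_ofAdd, tau_apply_of_odd hodd, toAdd_inv] at h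
    exact (ZHat.two_ne_zero (by linear_combination h)).elim

instance characteristic_periphH : periphH.Characteristic := periphH_eq_centralizer ▸ inferInstance

lemma sq_eq_inr_of_odd {g : ZHatSemidirect} (hg : proj2 g.right.toAdd = 1) :
    g ^ 2 = inr (g.right ^ 2) := by
  ext
  · simp [sq, tau_apply_of_odd hg]
  · simp [sq]

section Automorphism

variable (f : ZHatSemidirect ≃* ZHatSemidirect)

lemma right_map_inl (x : Multiplicative ZHat) : (f (inl x)).right = 1 :=
  (Subgroup.characteristic_iff_le_comap (H := rightHom.ker)).mp inferInstance f
    (right_inl (φ := tau) x)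

noncomputable def kernelAddHom : ZHat →+ ZHat where
  toFun x := toAdd (f (inl (ofAdd x))).left
  map_zero' := by simp
  map_add' x y := by simp [right_map_inl]

noncomputable def quotientAddHom : ZHat →+ ZHat :=
  AddMonoidHom.toMultiplicative.symm (rightHom.comp (f.toMonoidHom.comp inr))

lemma kernelAddHom_leftInverse :
    Function.LeftInverse (kernelAddHom f) (kernelAddHom f.symm) := by
  intro x
  have h : f.symm (inl (ofAdd x)) = inl (f.symm (inl (ofAdd x))).left := by
    conv_lhs => rw [← inl_left_mul_inr_right (f.symm _), right_map_inl, map_one, mul_one]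
  simp [kernelAddHom, ← h]

lemma quotientAddHom_leftInverse :
    Function.LeftInverse (quotientAddHom f) (quotientAddHom f.symm) := by
  intro x
  have h := congrArg right (f.apply_symm_apply (inr (ofAdd x)))
  rw [← inl_left_mul_inr_right (f.symm _), map_mul, mul_right, right_map_inl, one_mul] at h
  simp [quotientAddHom, h]

end Automorphism

/-- every isomorphism `f` between (two copies of) the profinite
completion `Ẑ ⋊ Ẑ` of the Klein bottle group satisfies `f(a) = α^μ`,
`f(b) = α^θ β^λ` and `f(b²) = β^(2λ)` for some units `λ, μ ∈ Ẑˣ` and some `θ ∈ Ẑ`;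
in particular `f` carries the closure of `⟨a, b²⟩` onto the closure of `⟨α, β²⟩`. -/
theorem klein_completion_automorphism_form (f : ZHatSemidirect ≃* ZHatSemidirect) :
    ∃ (lam mu : ZHatˣ) (θ : ZHat),
      f (SemidirectProduct.inl (Multiplicative.ofAdd (1 : ZHat))) =
        SemidirectProduct.inl (Multiplicative.ofAdd ((mu : ZHat))) ∧
      f (SemidirectProduct.inr (Multiplicative.ofAdd (1 : ZHat))) =
        SemidirectProduct.inl (Multiplicative.ofAdd θ) *
          SemidirectProduct.inr (Multiplicative.ofAdd ((lam : ZHat))) ∧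
      f (SemidirectProduct.inr (Multiplicative.ofAdd (2 : ZHat))) =
        SemidirectProduct.inr (Multiplicative.ofAdd (2 * (lam : ZHat))) ∧
      Subgroup.map f.toMonoidHom periphH = periphH := by
  obtain ⟨mu, hmu⟩ := ZHat.isUnit_map_one_of_leftInverse (kernelAddHom_leftInverse f)
  obtain ⟨lam, hlam⟩ := ZHat.isUnit_map_one_of_leftInverse (quotientAddHom_leftInverse f)
  have hb : (f (inr (ofAdd 1))).right = ofAdd (lam : ZHat) := by rw [hlam]; rfl
  refine ⟨lam, mu, toAdd (f (inr (ofAdd 1))).left, ?_, ?_, ?_,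
    Subgroup.characteristic_iff_map_eq.mp inferInstance f⟩
  · ext
    · rw [hmu]; rfl
    · simp [right_map_inl]
  · rw [← hb]
    exact (inl_left_mul_inr_right _).symm
  · have hsq : (inr (ofAdd (2 : ZHat)) : ZHatSemidirect) = inr (ofAdd 1) ^ 2 := by
      rw [← map_pow, ← ofAdd_nsmul, two_nsmul, one_add_one_eq_two]
    rw [hsq, map_pow, sq_eq_inr_of_odd (by rw [hb]; exact proj2_units_eq_one lam), hb,
      ← ofAdd_nsmul, nsmul_eq_mul, Nat.cast_ofNat]
end

section
/- Let G and G' be finitely generated groups, let H₁,…,Hₘ be subgroups of G and H₁',…,Hₘ' subgroups of G'. Then the following are equivalent: (1) the collections of isomorphism classes of finite quotients marked with the images of the Hᵢ (up to conjugacy) coincide, i.e. {[G/U; H₁U/U, …, HₘU/U] : U ◁_f G} = {[G'/V; H₁'V/V, …, Hₘ'V/V] : V ◁_f G'}; (2) there is an isomorphism of profinite groups f : Ĝ → Ĝ' such that f(cl(Hᵢ)) is conjugate to cl(Hᵢ') in Ĝ' for each i. -/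
universe u

section Completion

variable (G : Type u) [Group G]

/-- The index type: finite-index normal subgroups of `G`. -/
def FIN (G : Type u) [Group G] : Type u :=
  {N : Subgroup G // N.Normal ∧ N.FiniteIndex}

instance (N : FIN G) : N.1.Normal := N.2.1

instance (N : FIN G) : TopologicalSpace (G ⧸ N.1) := ⊥

instance (N : FIN G) : DiscreteTopology (G ⧸ N.1) := ⟨rfl⟩

instance (N : FIN G) : IsTopologicalGroup (G ⧸ N.1) where
  continuous_mul := continuous_of_discreteTopology
  continuous_inv := continuous_of_discreteTopology

/-- The profinite completion of `G`: the subgroup of compatible families in the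
product of all the finite quotients of `G`, topologized as a closed subgroup of the
product of the (discrete) finite quotients. -/
def completionSubgroup : Subgroup (∀ N : FIN G, G ⧸ N.1) where
  carrier := {x | ∀ (N M : FIN G) (h : N.1 ≤ M.1),
    QuotientGroup.map N.1 M.1 (MonoidHom.id G)
      (by rw [Subgroup.comap_id]; exact h) (x N) = x M}
  one_mem' := by
    intro N M h
    simp only [Pi.one_apply, map_one]
  mul_mem' := by
    intro a b ha hb N M h
    simp only [Pi.mul_apply, map_mul, ha N M h, hb N M h]
  inv_mem' := by
    intro a ha N M h
    simp only [Pi.inv_apply, map_inv, ha N M h]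

/-- The canonical map from `G` to its profinite completion. -/
def iota : G →* completionSubgroup G where
  toFun g := ⟨fun N => QuotientGroup.mk g, by
    intro N M h
    rfl⟩
  map_one' := by
    apply Subtype.ext
    funext N
    rfl
  map_mul' g h := by
    apply Subtype.ext
    funext N
    rfl

end Completion

/-!
Suppose every marked finite quotient of `G'` is one of `G`. For each finite-index normal `V` of
`G'`, the surjections `G → G'/V` realising `G'/V` together with conjugating elements form a finite
(since `G` is finitely generated) nonempty set, and these sets form an inverse system; by König's
lemma there is a compatible choice, which assembles into a continuous surjection `Ĝ → Ĝ'` carrying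
each `cl Hᵢ` to a conjugate of `cl H'ᵢ`. The symmetric hypothesis gives a continuous surjection
`Ĝ' → Ĝ`, and the composite is injective: a continuous surjective endomorphism of `Ĝ` permutes,
by precomposition, the finite set of continuous homomorphisms `Ĝ → G/N`, so every projection
`Ĝ → G/N` factors through it. Conversely, a finite quotient of `G` extends continuously to `Ĝ`;
composing with the isomorphism and restricting to the dense image of `G'` gives the matching
quotient of `G'`, and the markings agree up to conjugacy because continuous maps to a discrete
group do not see closures.
-/

namespace Subgroup

variable {X Y : Type*} [Group X] [Group Y]

def IsConjugate (A B : Subgroup X) : Prop :=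
  ∃ c : X, A = B.map (MulAut.conj c).toMonoidHom

theorem map_conj (F : X →* Y) (c : X) (A : Subgroup X) :
    (A.map (MulAut.conj c).toMonoidHom).map F = (A.map F).map (MulAut.conj (F c)).toMonoidHom := by
  rw [map_map, map_map]
  congr 1
  ext x
  simp

theorem IsConjugate.symm {A B : Subgroup X} : A.IsConjugate B → B.IsConjugate A := by
  rintro ⟨c, rfl⟩
  refine ⟨c⁻¹, ?_⟩
  have : (MulAut.conj c⁻¹).toMonoidHom.comp (MulAut.conj c).toMonoidHom = MonoidHom.id X := by
    ext x
    simp [mul_assoc]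
  rw [map_map, this, map_id]

theorem IsConjugate.map {A B : Subgroup X} (h : A.IsConjugate B) (F : X →* Y) :
    (A.map F).IsConjugate (B.map F) := by
  obtain ⟨c, rfl⟩ := h
  exact ⟨F c, map_conj F c B⟩

theorem IsConjugate.map_symm {A : Subgroup X} {B : Subgroup Y} {e : X ≃* Y}
    (h : (A.map e.toMonoidHom).IsConjugate B) : (B.map e.symm.toMonoidHom).IsConjugate A := by
  have hid : e.symm.toMonoidHom.comp e.toMonoidHom = MonoidHom.id X :=
    MonoidHom.ext e.symm_apply_apply
  have := h.map e.symm.toMonoidHom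
  rw [map_map, hid, map_id] at this
  exact this.symm

section Topology

variable [TopologicalSpace X] [TopologicalSpace Y]

theorem isClosed_map_of_compactSpace [CompactSpace X] [T2Space Y] {F : X →* Y}
    (hF : Continuous F) {K : Subgroup X} (hK : IsClosed (K : Set X)) :
    IsClosed (K.map F : Set Y) :=
  (hK.isCompact.image hF).isClosed

theorem map_topologicalClosure_of_discrete [IsTopologicalGroup X] [DiscreteTopology Y]
    {F : X →* Y} (hF : Continuous F) (K : Subgroup X) : K.topologicalClosure.map F = K.map F := by
  refine le_antisymm ?_ (map_mono K.le_topologicalClosure)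
  rintro _ ⟨x, hx, rfl⟩
  obtain ⟨y, hy, hxy⟩ := mem_closure_iff.mp hx _ ((isOpen_discrete {F x}).preimage hF) rfl
  exact ⟨y, hxy, hy⟩

end Topology

end Subgroup

theorem Group.finite_monoidHom (G Q : Type*) [Group G] [Group.FG G] [Group Q] [Finite Q] :
    Finite (G →* Q) := by
  obtain ⟨α, _, φ, hφ⟩ := Group.fg_iff_exists_freeGroup_hom_surjective_finite.mp ‹Group.FG G›
  have : Finite (FreeGroup α →* Q) := .of_equiv _ FreeGroup.lift
  exact .of_injective (fun f : G →* Q => f.comp φ) fun f g h => MonoidHom.cancel_right hφ |>.mp h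

theorem Continuous.surjective_comp_denseRange {X Y Z : Type*} [TopologicalSpace X]
    [TopologicalSpace Y] [DiscreteTopology Y] {f : X → Y} (hf : Continuous f)
    (hs : Function.Surjective f) {g : Z → X} (hg : DenseRange g) :
    Function.Surjective (f ∘ g) := fun y =>
  hg.exists_mem_open ((isOpen_discrete {y}).preimage hf) (hs y)

namespace FIN

variable {G : Type u} [Group G]

instance : SemilatticeInf (FIN G) :=
  (Subtype.semilatticeInf fun _ _ hN hM =>
      ⟨haveI := hN.1; haveI := hM.1; inferInstance, haveI := hN.2; haveI := hM.2; inferInstance⟩ :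
    SemilatticeInf {N : Subgroup G // N.Normal ∧ N.FiniteIndex})

instance : OrderTop (FIN G) :=
  (Subtype.orderTop ⟨inferInstance, inferInstance⟩ :
    OrderTop {N : Subgroup G // N.Normal ∧ N.FiniteIndex})

instance (N : FIN G) : Finite (G ⧸ N.1) :=
  haveI := N.2.2
  Subgroup.finite_quotient_of_finiteIndex

def quotientMap {N M : FIN G} (h : N ≤ M) : G ⧸ N.1 →* G ⧸ M.1 :=
  QuotientGroup.map N.1 M.1 (MonoidHom.id G) (by rw [Subgroup.comap_id]; exact h)

theorem quotientMap_refl (N : FIN G) : quotientMap (le_refl N) = MonoidHom.id _ :=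
  QuotientGroup.map_id _ _

theorem quotientMap_comp_quotientMap {N M K : FIN G} (h₁ : N ≤ M) (h₂ : M ≤ K) :
    (quotientMap h₂).comp (quotientMap h₁) = quotientMap (h₁.trans h₂) :=
  QuotientGroup.map_comp_map _ _ _ _ _ _ _

theorem quotientMap_surjective {N M : FIN G} (h : N ≤ M) :
    Function.Surjective (quotientMap h) :=
  fun y => QuotientGroup.induction_on y fun g => ⟨g, rfl⟩

def ofKer {Q : Type*} [Group Q] [Finite Q] (ψ : G →* Q) : FIN G :=
  ⟨ψ.ker, inferInstance, Subgroup.finiteIndex_ker ψ⟩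

end FIN

namespace completionSubgroup

open Topology

variable {G : Type u} [Group G]

def proj (N : FIN G) : completionSubgroup G →* G ⧸ N.1 :=
  (Pi.evalMonoidHom (fun N : FIN G => G ⧸ N.1) N).comp (completionSubgroup G).subtype

theorem quotientMap_proj (x : completionSubgroup G) {N M : FIN G} (h : N ≤ M) :
    FIN.quotientMap h (proj N x) = proj M x :=
  x.2 N M h

theorem continuous_proj (N : FIN G) : Continuous (proj N) :=
  (continuous_apply N).comp continuous_subtype_val

theorem ext_proj {x y : completionSubgroup G} (h : ∀ N, proj N x = proj N y) : x = y :=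
  Subtype.ext (funext h)

theorem exists_proj_fiber_subset {x : completionSubgroup G} {U : Set (completionSubgroup G)}
    (hU : U ∈ 𝓝 x) : ∃ N : FIN G, {y | proj N y = proj N x} ⊆ U := by
  obtain ⟨t, ht, htU⟩ := (mem_nhds_induced _ _ _).mp hU
  rw [nhds_pi, Filter.mem_pi'] at ht
  obtain ⟨I, u, hu, hIu⟩ := ht
  refine ⟨I.inf id, fun y hy => htU (hIu fun N hN => ?_)⟩
  have hle : I.inf id ≤ N := Finset.inf_le hN
  change proj N y ∈ u N
  rw [← quotientMap_proj y hle, hy, quotientMap_proj x hle]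
  exact mem_of_mem_nhds (hu N)

theorem denseRange_iota : DenseRange (iota G) := by
  refine fun x => mem_closure_iff_nhds.mpr fun U hU => ?_
  obtain ⟨N, hN⟩ := exists_proj_fiber_subset hU
  obtain ⟨g, hg⟩ := QuotientGroup.mk_surjective (proj N x)
  exact ⟨iota G g, hN hg, g, rfl⟩

theorem mem_of_forall_proj {A : Set (completionSubgroup G)} (hA : IsClosed A)
    {x : completionSubgroup G} (h : ∀ N, ∃ a ∈ A, proj N a = proj N x) : x ∈ A := by
  refine hA.closure_subset (mem_closure_iff_nhds.mpr fun U hU => ?_)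
  obtain ⟨N, hN⟩ := exists_proj_fiber_subset hU
  obtain ⟨a, haA, ha⟩ := h N
  exact ⟨a, hN ha, haA⟩

theorem le_of_map_proj_le {A B : Subgroup (completionSubgroup G)}
    (hB : IsClosed (B : Set (completionSubgroup G))) (h : ∀ N, A.map (proj N) ≤ B.map (proj N)) :
    A ≤ B := fun x hx =>
  mem_of_forall_proj hB fun N => by
    obtain ⟨b, hb, hbx⟩ := h N (Subgroup.mem_map_of_mem _ hx)
    exact ⟨b, hb, hbx⟩

theorem eq_of_map_proj_eq {A B : Subgroup (completionSubgroup G)}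
    (hA : IsClosed (A : Set (completionSubgroup G)))
    (hB : IsClosed (B : Set (completionSubgroup G)))
    (h : ∀ N, A.map (proj N) = B.map (proj N)) : A = B :=
  le_antisymm (le_of_map_proj_le hB fun N => (h N).le) (le_of_map_proj_le hA fun N => (h N).ge)

theorem isClosed_completionSubgroup :
    IsClosed (completionSubgroup G : Set (∀ N : FIN G, G ⧸ N.1)) := by
  simp only [completionSubgroup, Subgroup.coe_set_mk, Submonoid.coe_set_mk,
    Subsemigroup.coe_set_mk, Set.ofPred_forall]
  exact isClosed_iInter fun N => isClosed_iInter fun M => isClosed_iInter fun _ =>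
    isClosed_eq (continuous_of_discreteTopology.comp (continuous_apply N)) (continuous_apply M)

instance : CompactSpace (completionSubgroup G) :=
  isCompact_iff_compactSpace.mp isClosed_completionSubgroup.isCompact

theorem hom_ext {Q : Type*} [Group Q] [TopologicalSpace Q] [T2Space Q]
    {φ₁ φ₂ : completionSubgroup G →* Q} (h₁ : Continuous φ₁) (h₂ : Continuous φ₂)
    (h : φ₁.comp (iota G) = φ₂.comp (iota G)) : φ₁ = φ₂ :=
  MonoidHom.ext <| congrFun <| denseRange_iota.equalizer h₁ h₂ <| congrArg DFunLike.coe h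

theorem map_topologicalClosure_map_iota {Q : Type*} [Group Q] [TopologicalSpace Q]
    [DiscreteTopology Q] {F : completionSubgroup G →* Q} (hF : Continuous F) (K : Subgroup G) :
    (K.map (iota G)).topologicalClosure.map F = K.map (F.comp (iota G)) := by
  rw [Subgroup.map_topologicalClosure_of_discrete hF, Subgroup.map_map]

section Lift

variable {Q : Type*} [Group Q] [Finite Q]

noncomputable def lift (ψ : G →* Q) : completionSubgroup G →* Q :=
  (QuotientGroup.lift (FIN.ofKer ψ).1 ψ le_rfl).comp (proj (FIN.ofKer ψ))

theorem lift_comp_iota (ψ : G →* Q) : (lift ψ).comp (iota G) = ψ :=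
  rfl

theorem continuous_lift [TopologicalSpace Q] [DiscreteTopology Q] (ψ : G →* Q) :
    Continuous (lift ψ) :=
  (continuous_of_discreteTopology (f := QuotientGroup.lift (FIN.ofKer ψ).1 ψ le_rfl)).comp
    (continuous_proj _)

end Lift

section Map

variable {G' : Type*} [Group G'] (ψ : ∀ N : FIN G', G →* G' ⧸ N.1)
  (hψ : ∀ ⦃N M : FIN G'⦄ (h : N ≤ M), (FIN.quotientMap h).comp (ψ N) = ψ M)

noncomputable def map : completionSubgroup G →* completionSubgroup G' :=
  (MonoidHom.pi fun N => lift (ψ N)).codRestrict _ fun x N M h => by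
    have : (FIN.quotientMap h).comp (lift (ψ N)) = lift (ψ M) :=
      hom_ext ((continuous_of_discreteTopology (f := FIN.quotientMap h)).comp (continuous_lift _))
        (continuous_lift _) <| by rw [MonoidHom.comp_assoc, lift_comp_iota, lift_comp_iota, hψ h]
    exact DFunLike.congr_fun this x

theorem continuous_map : Continuous (map ψ hψ) :=
  continuous_induced_rng.mpr (continuous_pi fun N => continuous_lift (ψ N))

theorem surjective_map (hs : ∀ N, Function.Surjective (ψ N)) :
    Function.Surjective (map ψ hψ) := fun x =>
  mem_of_forall_proj (isCompact_range (continuous_map ψ hψ)).isClosed fun N => by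
    obtain ⟨g, hg⟩ := hs N (proj N x)
    exact ⟨map ψ hψ (iota G g), ⟨_, rfl⟩, hg⟩

end Map

theorem finite_continuousMonoidHom [Group.FG G] (Q : Type*) [Group Q] [Finite Q]
    [TopologicalSpace Q] [DiscreteTopology Q] :
    Finite {φ : completionSubgroup G →* Q // Continuous φ} :=
  haveI := Group.finite_monoidHom G Q
  .of_injective (fun φ => φ.1.comp (iota G)) fun φ₁ φ₂ h => Subtype.ext (hom_ext φ₁.2 φ₂.2 h)

theorem injective_of_continuous_of_surjective [Group.FG G]
    {f : completionSubgroup G →* completionSubgroup G} (hc : Continuous f)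
    (hs : Function.Surjective f) : Function.Injective f := by
  refine (injective_iff_map_eq_one f).mpr fun x hx => ext_proj fun N => ?_
  have := finite_continuousMonoidHom (G := G) (G ⧸ N.1)
  let precomp (φ : {φ : completionSubgroup G →* G ⧸ N.1 // Continuous φ}) :
      {φ : completionSubgroup G →* G ⧸ N.1 // Continuous φ} :=
    ⟨φ.1.comp f, φ.2.comp hc⟩
  have hinj : Function.Injective precomp := fun φ₁ φ₂ h =>
    Subtype.ext ((MonoidHom.cancel_right hs).mp (congrArg Subtype.val h))
  obtain ⟨φ, hφ⟩ := Finite.injective_iff_surjective.mp hinj ⟨proj N, continuous_proj N⟩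
  have hproj : proj N = φ.1.comp f := congrArg Subtype.val hφ.symm
  rw [hproj, MonoidHom.comp_apply, hx, map_one, map_one]

end completionSubgroup

section MarkedSurjection

open CategoryTheory completionSubgroup

variable {G G' : Type u} [Group G] [Group G'] {m : ℕ} (H : Fin m → Subgroup G)
  (H' : Fin m → Subgroup G')

/-- The marked finite quotients `[G/U; HᵢU/U]` are among the `[G'/V; H'ᵢV/V]`: a marked finite
quotient of `G` is encoded by a surjection `π : G →* Q`. -/
def MarkedFiniteQuotientsSubset : Prop :=
  ∀ (Q : Type u) [Group Q] [Finite Q] (π : G →* Q), Function.Surjective π →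
    ∃ π' : G' →* Q, Function.Surjective π' ∧ ∀ i, ((H i).map π).IsConjugate ((H' i).map π')

-- The conjugating elements are part of the data, so that a compatible family of them is a point
-- of `completionSubgroup G'`.
def MarkedSurjection (N : FIN G') : Type u :=
  {p : (G →* G' ⧸ N.1) × (Fin m → G' ⧸ N.1) // Function.Surjective p.1 ∧
    ∀ i, (H i).map p.1 = ((H' i).map (QuotientGroup.mk' N.1)).map (MulAut.conj (p.2 i)).toMonoidHom}

instance [Group.FG G] (N : FIN G') : Finite (MarkedSurjection H H' N) :=
  haveI := Group.finite_monoidHom G (G' ⧸ N.1)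
  Subtype.finite

variable {H H'}

def MarkedSurjection.pushforward {N M : FIN G'} (h : N ≤ M) (p : MarkedSurjection H H' N) :
    MarkedSurjection H H' M :=
  ⟨((FIN.quotientMap h).comp p.1.1, FIN.quotientMap h ∘ p.1.2),
    (FIN.quotientMap_surjective h).comp p.2.1, fun i => by
      rw [← Subgroup.map_map, p.2.2 i, Subgroup.map_conj]
      exact congrArg (fun K : Subgroup (G' ⧸ M.1) => K.map (MulAut.conj _).toMonoidHom)
        (Subgroup.map_map _ _ _)⟩

theorem MarkedSurjection.pushforward_refl {N : FIN G'} (p : MarkedSurjection H H' N) :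
    p.pushforward le_rfl = p := by
  have hq := FIN.quotientMap_refl N
  exact Subtype.ext <|
    Prod.ext (congrArg (·.comp p.1.1) hq) (funext fun i => DFunLike.congr_fun hq _)

theorem MarkedSurjection.pushforward_pushforward {N M K : FIN G'} (h₁ : N ≤ M) (h₂ : M ≤ K)
    (p : MarkedSurjection H H' N) :
    (p.pushforward h₁).pushforward h₂ = p.pushforward (h₁.trans h₂) := by
  have hq := FIN.quotientMap_comp_quotientMap h₁ h₂
  refine Subtype.ext (Prod.ext ?_ (funext fun i => DFunLike.congr_fun hq _))
  exact (MonoidHom.comp_assoc _ _ _).symm.trans (congrArg (·.comp p.1.1) hq)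

variable (H H')

def markedSurjectionSystem : FIN G' ⥤ Type u where
  obj := MarkedSurjection H H'
  map f := TypeCat.ofHom (MarkedSurjection.pushforward f.le)
  map_id N := by
    ext p
    exact p.pushforward_refl
  map_comp f g := by
    ext p
    exact (p.pushforward_pushforward f.le g.le).symm

theorem exists_compatible_markedSurjections [Group.FG G] (h : MarkedFiniteQuotientsSubset H' H) :
    ∃ s : ∀ N, MarkedSurjection H H' N,
      ∀ ⦃N M : FIN G'⦄ (hNM : N ≤ M), (s N).pushforward hNM = s M := by
  have (N : FIN G') : Finite ((markedSurjectionSystem H H').obj N) :=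
    inferInstanceAs (Finite (MarkedSurjection H H' N))
  have (N : FIN G') : Nonempty ((markedSurjectionSystem H H').obj N) := by
    obtain ⟨π, hπ, hconj⟩ :=
      h (G' ⧸ N.1) (QuotientGroup.mk' N.1) (QuotientGroup.mk'_surjective N.1)
    choose c hc using fun i => (hconj i).symm
    exact ⟨⟨(π, c), hπ, hc⟩⟩
  obtain ⟨s, hs⟩ := nonempty_sections_of_finite_cofiltered_system (markedSurjectionSystem H H')
  exact ⟨s, fun _ _ hNM => hs (homOfLE hNM)⟩

theorem exists_continuous_surjective_of_markedFiniteQuotientsSubset [Group.FG G]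
    (h : MarkedFiniteQuotientsSubset H' H) :
    ∃ f : completionSubgroup G →* completionSubgroup G', Continuous f ∧
      Function.Surjective f ∧ ∀ i, (((H i).map (iota G)).topologicalClosure.map f).IsConjugate
        ((H' i).map (iota G')).topologicalClosure := by
  obtain ⟨s, hs⟩ := exists_compatible_markedSurjections H H' h
  let f := completionSubgroup.map (fun N => (s N).1.1) fun _ _ hNM => congrArg (·.1.1) (hs hNM)
  have hfc : Continuous f := continuous_map _ _
  refine ⟨f, hfc, surjective_map _ _ fun N => (s N).2.1, fun i => ?_⟩
  let c : completionSubgroup G' :=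
    ⟨fun N => (s N).1.2 i, fun _ _ hNM => congrFun (congrArg (·.1.2) (hs hNM)) i⟩
  refine ⟨c, eq_of_map_proj_eq
    (Subgroup.isClosed_map_of_compactSpace hfc (Subgroup.isClosed_topologicalClosure _))
    (Subgroup.isClosed_map_of_compactSpace (IsTopologicalGroup.continuous_conj c)
      (Subgroup.isClosed_topologicalClosure _)) fun N => ?_⟩
  have hpf : Continuous ((proj N).comp f) := (continuous_proj N).comp hfc
  rw [Subgroup.map_map, map_topologicalClosure_map_iota hpf,
    Subgroup.map_conj, map_topologicalClosure_map_iota (continuous_proj N)]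
  exact (s N).2.2 i

theorem markedFiniteQuotientsSubset_of_continuous_surjective
    {φ : completionSubgroup G' →* completionSubgroup G} (hc : Continuous φ)
    (hs : Function.Surjective φ)
    (hH : ∀ i, (((H' i).map (iota G')).topologicalClosure.map φ).IsConjugate
      ((H i).map (iota G)).topologicalClosure) :
    MarkedFiniteQuotientsSubset H H' := by
  intro Q _ _ π hπ
  let _ : TopologicalSpace Q := ⊥
  have : DiscreteTopology Q := ⟨rfl⟩
  have hlc : Continuous ((lift π).comp φ) := (continuous_lift π).comp hc
  have hls : Function.Surjective (lift π) := fun q => by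
    obtain ⟨g, rfl⟩ := hπ q
    exact ⟨iota G g, rfl⟩
  refine ⟨((lift π).comp φ).comp (iota G'),
    hlc.surjective_comp_denseRange (hls.comp hs) denseRange_iota, fun i => ?_⟩
  have hG : (H i).map π = ((H i).map (iota G)).topologicalClosure.map (lift π) :=
    (map_topologicalClosure_map_iota (continuous_lift π) (H i)).symm
  have hG' : (H' i).map (((lift π).comp φ).comp (iota G')) =
      (((H' i).map (iota G')).topologicalClosure.map φ).map (lift π) := by
    rw [Subgroup.map_map, map_topologicalClosure_map_iota hlc]
  rw [hG, hG']
  exact ((hH i).map (lift π)).symm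

end MarkedSurjection

/-- for finitely generated groups `G, G'` with marked subgroups
`H₁, …, Hₘ` and `H₁', …, Hₘ'`, the collections of finite quotients marked with the
(conjugacy classes of the) images of the marked subgroups coincide if and only if there
is an isomorphism of profinite completions (as topological groups) carrying the closure
of each `Hᵢ` to a conjugate of the closure of `Hᵢ'`. -/
theorem marked_finite_quotients_iff_profinite_iso
    (G G' : Type u) [Group G] [Group G'] [Group.FG G] [Group.FG G']
    (m : ℕ) (H : Fin m → Subgroup G) (H' : Fin m → Subgroup G') :
    ((∀ (Q : Type u) [Group Q] [Finite Q] (π : G →* Q), Function.Surjective π →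
        ∃ π' : G' →* Q, Function.Surjective π' ∧ ∀ i : Fin m, ∃ c : Q,
          (H i).map π =
            Subgroup.map (MulAut.conj c).toMonoidHom ((H' i).map π')) ∧
     (∀ (Q : Type u) [Group Q] [Finite Q] (π' : G' →* Q), Function.Surjective π' →
        ∃ π : G →* Q, Function.Surjective π ∧ ∀ i : Fin m, ∃ c : Q,
          (H' i).map π' =
            Subgroup.map (MulAut.conj c).toMonoidHom ((H i).map π)))
    ↔ ∃ e : completionSubgroup G ≃* completionSubgroup G',
        Continuous (⇑e) ∧ Continuous (⇑e.symm) ∧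
        ∀ i : Fin m, ∃ c : completionSubgroup G',
          Subgroup.map e.toMonoidHom (((H i).map (iota G)).topologicalClosure) =
            Subgroup.map (MulAut.conj c).toMonoidHom
              (((H' i).map (iota G')).topologicalClosure) := by
  constructor
  · rintro ⟨hGG', hG'G⟩
    obtain ⟨f, hfc, hfs, hfH⟩ :=
      exists_continuous_surjective_of_markedFiniteQuotientsSubset H H' hG'G
    obtain ⟨g, hgc, hgs, -⟩ :=
      exists_continuous_surjective_of_markedFiniteQuotientsSubset H' H hGG'
    have hgfi := completionSubgroup.injective_of_continuous_of_surjective (f := g.comp f)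
      (hgc.comp hfc) (hgs.comp hfs)
    rw [MonoidHom.coe_comp] at hgfi
    let e := MulEquiv.ofBijective f ⟨hgfi.of_comp, hfs⟩
    exact ⟨e, hfc, (hfc.homeoOfEquivCompactToT2 (f := e.toEquiv)).symm.continuous, hfH⟩
  · rintro ⟨e, hec, hesc, hH⟩
    exact ⟨markedFiniteQuotientsSubset_of_continuous_surjective H H' (φ := e.symm.toMonoidHom)
        hesc e.symm.surjective fun i => Subgroup.IsConjugate.map_symm (hH i),
      markedFiniteQuotientsSubset_of_continuous_surjective H' H hec e.surjective hH⟩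
end
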